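/- Let α ∈ RO. The weight function k(ξ) := α((1+|ξ|²)^{1/2}) on ℝⁿ satisfies: there exist constants C ≥ 1 and N ≥ 0 such that k(ξ + η) ≤ C (1 + |ξ|)^N k(η) for all ξ, η ∈ ℝⁿ. -/

import Mathlib

/-- The class RO of RO-varying functions at infinity. -/
def RO (α : ℝ → ℝ) : Prop :=
  Measurable α ∧ (∀ t ≥ (1:ℝ), 0 < α t) ∧
    ∃ b > (1:ℝ), ∃ c ≥ (1:ℝ), ∀ t ≥ (1:ℝ), ∀ l ∈ Set.Icc (1:ℝ) b,
      c⁻¹ ≤ α (l * t) / α t ∧ α (l * t) / α t ≤ c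

/-- The Hörmander weight `ξ ↦ α(⟨ξ⟩)`. -/
noncomputable def wt (α : ℝ → ℝ) {n : ℕ} (ξ : EuclideanSpace ℝ (Fin n)) : ℝ :=
  α (Real.sqrt (1 + ‖ξ‖ ^ 2))

/-!
Iterating the bound of `α(l t) / α t` for `l ∈ [1, b]` gives `α(l t) ≤ c^k α(t)` and
`α(t) ≤ c^k α(l t)` whenever `l ≤ b^k`, hence, with `k = ⌈log_b l⌉`, the polynomial bounds
`α(l t) ≤ c l^s α(t)` and `α(t) ≤ c l^s α(l t)` with `s = log_b c`. Peetre's inequality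
`⟨ξ + η⟩ ≤ (1 + |ξ|) ⟨η⟩` for `⟨ξ⟩ = √(1 + |ξ|²)`, applied also to `η = -ξ + (ξ + η)`, shows
that `⟨ξ + η⟩` and `⟨η⟩` differ by a factor at most `1 + |ξ|`, so `C = c` and `N = log_b c` work.
-/

open Real Set

lemma one_le_sqrt_one_add_sq (x : ℝ) : 1 ≤ √(1 + x ^ 2) :=
  one_le_sqrt.2 (by nlinarith [sq_nonneg x])

lemma sqrt_one_add_norm_add_sq_le {E : Type*} [SeminormedAddGroup E] (x y : E) :
    √(1 + ‖x + y‖ ^ 2) ≤ (1 + ‖x‖) * √(1 + ‖y‖ ^ 2) := by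
  have hx := norm_nonneg x
  have hy := norm_nonneg y
  have h_sq : 1 + ‖x + y‖ ^ 2 ≤ (1 + ‖x‖) ^ 2 * (1 + ‖y‖ ^ 2) := by
    have := norm_add_le x y
    have : ‖x + y‖ ^ 2 ≤ (‖x‖ + ‖y‖) ^ 2 := by gcongr
    nlinarith [sq_nonneg (‖y‖ - 1), mul_nonneg hx hy, mul_nonneg (mul_nonneg hx hx) hy]
  calc √(1 + ‖x + y‖ ^ 2) ≤ √((1 + ‖x‖) ^ 2 * (1 + ‖y‖ ^ 2)) := sqrt_le_sqrt h_sq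
    _ = (1 + ‖x‖) * √(1 + ‖y‖ ^ 2) := by rw [sqrt_mul' _ (by positivity), sqrt_sq (by positivity)]

section Iteration

variable {α : ℝ → ℝ} {b c : ℝ}

lemma mul_bounds_of_div_bounds (hpos : ∀ t ≥ 1, 0 < α t) (hc : 0 < c)
    (H : ∀ t ≥ 1, ∀ l ∈ Icc 1 b, c⁻¹ ≤ α (l * t) / α t ∧ α (l * t) / α t ≤ c) :
    ∀ t ≥ 1, ∀ l ∈ Icc 1 b, α (l * t) ≤ c * α t ∧ α t ≤ c * α (l * t) := by
  intro t ht l hl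
  obtain ⟨h_lower, h_upper⟩ := H t ht l hl
  have hαt := hpos t ht
  rw [inv_le_iff_one_le_mul₀ hc, div_mul_eq_mul_div, le_div_iff₀ hαt, one_mul, mul_comm] at h_lower
  rw [div_le_iff₀ hαt] at h_upper
  exact ⟨h_upper, h_lower⟩

lemma mul_bounds_pow (hb : 1 ≤ b) (hc : 0 ≤ c)
    (H : ∀ t ≥ 1, ∀ l ∈ Icc 1 b, α (l * t) ≤ c * α t ∧ α t ≤ c * α (l * t)) :
    ∀ k : ℕ, ∀ t ≥ 1, ∀ l ∈ Icc 1 (b ^ k), α (l * t) ≤ c ^ k * α t ∧ α t ≤ c ^ k * α (l * t) := by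
  intro k
  induction k with
  | zero =>
    rintro t - l ⟨hl₁, hl₂⟩
    obtain rfl : l = 1 := le_antisymm (by simpa using hl₂) hl₁
    simp
  | succ k ih =>
    rintro t ht l ⟨hl₁, hl₂⟩
    -- split `l = m * l'` with `m ∈ [1, b]` and `l' ∈ [1, b ^ k]`
    set m := min l b
    have hm : m ∈ Icc 1 b := ⟨le_min hl₁ hb, min_le_right _ _⟩
    have hm₀ : 0 < m := by linarith [hm.1]
    have hl' : l / m ∈ Icc 1 (b ^ k) := by
      refine ⟨(one_le_div hm₀).2 (min_le_left _ _), (div_le_iff₀ hm₀).2 ?_⟩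
      rcases le_total l b with hlb | hbl
      · simp only [m, min_eq_left hlb]
        nlinarith [one_le_pow₀ (n := k) hb]
      · simpa only [m, min_eq_right hbl, pow_succ] using hl₂
    have hlt : 1 ≤ l / m * t := one_le_mul_of_one_le_of_one_le hl'.1 ht
    obtain ⟨h₁, h₂⟩ := H _ hlt m hm
    obtain ⟨h₃, h₄⟩ := ih t ht _ hl'
    have hml : m * (l / m * t) = l * t := by field_simp
    rw [hml] at h₁ h₂
    constructor
    · calc α (l * t) ≤ c * (c ^ k * α t) := h₁.trans (mul_le_mul_of_nonneg_left h₃ hc)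
        _ = c ^ (k + 1) * α t := by ring
    · calc α t ≤ c ^ k * (c * α (l * t)) := h₄.trans (mul_le_mul_of_nonneg_left h₂ (by positivity))
        _ = c ^ (k + 1) * α (l * t) := by ring

end Iteration

lemma pow_ceil_logb_le {b c l : ℝ} (hb : 1 < b) (hc : 1 ≤ c) (hl : 1 ≤ l) :
    c ^ ⌈logb b l⌉₊ ≤ c * l ^ logb b c := by
  have hc₀ : 0 < c := by linarith
  have hl₀ : 0 < l := by linarith
  have hk : (⌈logb b l⌉₊ : ℝ) ≤ logb b l + 1 :=
    (Nat.ceil_lt_add_one (logb_nonneg hb hl)).le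
  have h_swap : c ^ logb b l = l ^ logb b c := by
    rw [rpow_def_of_pos hc₀, rpow_def_of_pos hl₀, logb, logb]
    ring_nf
  calc c ^ ⌈logb b l⌉₊ = c ^ (⌈logb b l⌉₊ : ℝ) := (rpow_natCast c _).symm
    _ ≤ c ^ (logb b l + 1) := rpow_le_rpow_of_exponent_le hc hk
    _ = c * l ^ logb b c := by rw [rpow_add hc₀, rpow_one, h_swap, mul_comm]

section Polynomial

variable {α : ℝ → ℝ}

lemma mul_bounds_rpow {b c : ℝ} (hpos : ∀ t ≥ 1, 0 < α t) (hb : 1 < b) (hc : 1 ≤ c)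
    (H : ∀ t ≥ 1, ∀ l ∈ Icc 1 b, α (l * t) ≤ c * α t ∧ α t ≤ c * α (l * t)) :
    ∀ t ≥ 1, ∀ l ≥ 1,
      α (l * t) ≤ c * l ^ logb b c * α t ∧ α t ≤ c * l ^ logb b c * α (l * t) := by
  intro t ht l hl
  have hl_le : l ≤ b ^ ⌈logb b l⌉₊ := by
    rw [← rpow_natCast, ← logb_le_iff_le_rpow hb (by linarith)]
    exact Nat.le_ceil _
  obtain ⟨h₁, h₂⟩ := mul_bounds_pow hb.le (by linarith) H _ t ht l ⟨hl, hl_le⟩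
  have hk := pow_ceil_logb_le hb hc hl
  have hαt := (hpos t ht).le
  have hαlt := (hpos (l * t) (one_le_mul_of_one_le_of_one_le hl ht)).le
  exact ⟨h₁.trans (by gcongr), h₂.trans (by gcongr)⟩

lemma le_mul_rpow_mul_of_le_mul {A s M t u : ℝ} (hpos : ∀ t ≥ 1, 0 < α t) (hA : 0 ≤ A)
    (hs : 0 ≤ s) (H : ∀ t ≥ 1, ∀ l ≥ 1, α (l * t) ≤ A * l ^ s * α t ∧ α t ≤ A * l ^ s * α (l * t))
    (ht : 1 ≤ t) (hu : 1 ≤ u) (htu : t ≤ M * u) (hut : u ≤ M * t) :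
    α t ≤ A * M ^ s * α u := by
  have hαu := (hpos u hu).le
  rcases le_total u t with h | h
  · have hl : 1 ≤ t / u := (one_le_div (by linarith)).2 h
    have hlM : t / u ≤ M := (div_le_iff₀ (by linarith)).2 htu
    have := (H u hu (t / u) hl).1
    rw [div_mul_cancel₀ _ (by linarith)] at this
    exact this.trans (by gcongr)
  · have hl : 1 ≤ u / t := (one_le_div (by linarith)).2 h
    have hlM : u / t ≤ M := (div_le_iff₀ (by linarith)).2 hut
    have := (H t ht (u / t) hl).2
    rw [div_mul_cancel₀ _ (by linarith)] at this
    exact this.trans (by gcongr)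

end Polynomial

/-- for `α ∈ RO`, the weight `k(ξ) = α((1+|ξ|²)^{1/2})` is a tempered
weight function in Hörmander's sense: `k(ξ+η) ≤ C (1+|ξ|)^N k(η)` for all `ξ, η`. -/
theorem weight_is_tempered (n : ℕ) (α : ℝ → ℝ) (hα : RO α) :
    ∃ C ≥ (1:ℝ), ∃ N ≥ (0:ℝ), ∀ ξ η : EuclideanSpace ℝ (Fin n),
      wt α (ξ + η) ≤ C * (1 + ‖ξ‖) ^ N * wt α η := by
  obtain ⟨-, hpos, b, hb, c, hc, H⟩ := hα
  have H_mul := mul_bounds_of_div_bounds hpos (by linarith) H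
  have H_rpow := mul_bounds_rpow hpos hb hc H_mul
  refine ⟨c, hc, logb b c, logb_nonneg hb hc, fun ξ η ↦ ?_⟩
  refine le_mul_rpow_mul_of_le_mul hpos (by linarith) (logb_nonneg hb hc) H_rpow
    (one_le_sqrt_one_add_sq _) (one_le_sqrt_one_add_sq _)
    (sqrt_one_add_norm_add_sq_le ξ η) ?_
  simpa [add_comm ξ η] using sqrt_one_add_norm_add_sq_le (-ξ) (ξ + η)
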